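/- arXiv:1705.05269 — 2 statements merged into one kernel-verified Lean document; each statement's English description precedes it below -/
import Mathlib

section
/- Let Y be a set, F a convex cone of functions Y → [0,∞] (closed under addition and multiplication by positive scalars), and f₀ ∈ F with 0 < f₀(y) < ∞ for all y. For φ : Y → [0,∞] define F_φ := inf { f ∈ F : f ≥ φ pointwise } (pointwise infimum). Suppose A ⊆ Y and there exist α, M ∈ (1,∞) such that α·φ(y) ≤ min(F_φ(y), M·f₀(y)) for all y ∈ A. Then F_{φ·1_{Y∖A}} = F_φ, i.e. the envelope of φ restricted to the complement of A equals the envelope of φ. -/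
/-! If `g ∈ F` dominates `φ` off `A`, then `g + c • f₀` dominates `φ` for `c = M`, and whenever
`F_φ ≤ g + c • f₀` the bound `α φ ≤ F_φ` on `A` shows that `g + (c / α) • f₀` dominates `φ` as well.
Iterating, `F_φ ≤ g + (M / αⁿ) • f₀` for all `n`, and letting `n → ∞` gives `F_φ ≤ g`. -/

open scoped ENNReal

/-- Envelope with respect to a convex cone of nonnegative extended-real functions. -/
noncomputable def coneEnvelope {Y : Type*} (F : Set (Y → ℝ≥0∞)) (φ : Y → ℝ≥0∞) : Y → ℝ≥0∞ :=
  fun y => ⨅ f ∈ {f | f ∈ F ∧ ∀ z, φ z ≤ f z}, f y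

open Filter Topology

namespace ENNReal

theorem le_of_forall_le_add_pow_mul {a b r d : ℝ≥0∞} (hr : r < 1) (hd : d ≠ ∞)
    (h : ∀ n : ℕ, a ≤ b + r ^ n * d) : a ≤ b := by
  have hlim : Tendsto (fun n : ℕ => b + r ^ n * d) atTop (𝓝 b) := by
    simpa using tendsto_const_nhds.add
      (ENNReal.Tendsto.mul_const (ENNReal.tendsto_pow_atTop_nhds_zero_of_lt_one hr) (Or.inr hd))
  exact ge_of_tendsto' hlim h

end ENNReal

section coneEnvelope

variable {Y : Type*} {F : Set (Y → ℝ≥0∞)} {φ ψ f g f₀ : Y → ℝ≥0∞} {A : Set Y} {α c M : ℝ≥0∞}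

theorem coneEnvelope_le (hf : f ∈ F) (hφf : φ ≤ f) : coneEnvelope F φ ≤ f :=
  fun _ => iInf₂_le f ⟨hf, hφf⟩

theorem le_coneEnvelope (h : ∀ f ∈ F, φ ≤ f → ψ ≤ f) : ψ ≤ coneEnvelope F φ :=
  fun y => le_iInf₂ fun f hf => h f hf.1 hf.2 y

theorem coneEnvelope_mono (h : ψ ≤ φ) : coneEnvelope F ψ ≤ coneEnvelope F φ :=
  le_coneEnvelope fun _ hf hφf => coneEnvelope_le hf (h.trans hφf)

theorem le_add_of_indicator_compl_le (hg : Aᶜ.indicator φ ≤ g) (hA : ∀ y ∈ A, φ y ≤ g y + f y) :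
    φ ≤ g + f := by
  intro y
  by_cases hy : y ∈ A
  · exact hA y hy
  · exact (Set.indicator_of_mem (Set.mem_compl hy) φ ▸ hg y).trans le_self_add

theorem le_add_inv_mul_smul_of_coneEnvelope_le (hα : 1 ≤ α) (hα' : α ≠ ∞)
    (hg : Aᶜ.indicator φ ≤ g) (hA : ∀ y ∈ A, α * φ y ≤ coneEnvelope F φ y)
    (h : coneEnvelope F φ ≤ g + c • f₀) : φ ≤ g + (α⁻¹ * c) • f₀ := by
  refine le_add_of_indicator_compl_le hg fun y hy => ?_
  have hα₀ : α ≠ 0 := (zero_lt_one.trans_le hα).ne'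
  calc φ y = α⁻¹ * (α * φ y) := by rw [← mul_assoc, ENNReal.inv_mul_cancel hα₀ hα', one_mul]
    _ ≤ α⁻¹ * (g y + c * f₀ y) := by gcongr; exact (hA y hy).trans (h y)
    _ = α⁻¹ * g y + (α⁻¹ * c) * f₀ y := by ring
    _ ≤ g y + (α⁻¹ * c) * f₀ y := by
      gcongr; exact mul_le_of_le_one_left' (ENNReal.inv_le_one.2 hα)

theorem coneEnvelope_le_of_indicator_compl_le
    (hadd : ∀ f ∈ F, ∀ g ∈ F, f + g ∈ F)
    (hsmul : ∀ c : ℝ≥0∞, 0 < c → c < ∞ → ∀ f ∈ F, c • f ∈ F)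
    (hf₀F : f₀ ∈ F) (hf₀fin : ∀ y, f₀ y < ∞) (hα : 1 < α) (hα' : α < ∞) (hM : 0 < M)
    (hM' : M < ∞) (hA : ∀ y ∈ A, α * φ y ≤ min (coneEnvelope F φ y) (M * f₀ y))
    (hgF : g ∈ F) (hg : Aᶜ.indicator φ ≤ g) : coneEnvelope F φ ≤ g := by
  have hmem (n : ℕ) : g + (α⁻¹ ^ n * M) • f₀ ∈ F :=
    hadd g hgF _ <| hsmul _ (ENNReal.mul_pos (pow_ne_zero _ (ENNReal.inv_ne_zero.2 hα'.ne)) hM.ne')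
      (ENNReal.mul_lt_top (ENNReal.pow_lt_top (ENNReal.inv_lt_top.2 (zero_lt_one.trans hα))) hM')
      f₀ hf₀F
  have hbound (n : ℕ) : coneEnvelope F φ ≤ g + (α⁻¹ ^ n * M) • f₀ := by
    induction n with
    | zero =>
      refine coneEnvelope_le (hmem 0) (le_add_of_indicator_compl_le hg fun y hy => ?_)
      have hφM := (le_mul_of_one_le_left' hα.le).trans ((hA y hy).trans (min_le_right _ _))
      simpa using hφM.trans le_add_self
    | succ n ih =>
      refine coneEnvelope_le (hmem (n + 1)) ?_
      rw [pow_succ', mul_assoc]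
      exact le_add_inv_mul_smul_of_coneEnvelope_le hα.le hα'.ne hg
        (fun y hy => (hA y hy).trans (min_le_left _ _)) ih
  intro y
  refine ENNReal.le_of_forall_le_add_pow_mul (ENNReal.inv_lt_one.2 hα)
    (ENNReal.mul_ne_top hM'.ne (hf₀fin y).ne) fun n => ?_
  simpa [mul_assoc] using hbound n y

end coneEnvelope

theorem stmt_0_general {Y : Type*} (F : Set (Y → ℝ≥0∞))
    (hadd : ∀ f ∈ F, ∀ g ∈ F, f + g ∈ F)
    (hsmul : ∀ c : ℝ≥0∞, 0 < c → c < ∞ → ∀ f ∈ F, c • f ∈ F)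
    (f₀ : Y → ℝ≥0∞) (hf₀F : f₀ ∈ F) (hf₀fin : ∀ y, f₀ y < ∞)
    (φ : Y → ℝ≥0∞) (A : Set Y) (α M : ℝ≥0∞)
    (hα : 1 < α) (hα' : α < ∞) (hM : 1 < M) (hM' : M < ∞)
    (hA : ∀ y ∈ A, α * φ y ≤ min (coneEnvelope F φ y) (M * f₀ y)) :
    coneEnvelope F (Set.indicator Aᶜ φ) = coneEnvelope F φ :=
  le_antisymm (coneEnvelope_mono (Set.indicator_le_self _ _)) <| le_coneEnvelope fun _ hgF hg =>
    coneEnvelope_le_of_indicator_compl_le hadd hsmul hf₀F hf₀fin hα hα' (zero_lt_one.trans hM) hM'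
      hA hgF hg

theorem stmt_0 {Y : Type*} (F : Set (Y → ℝ≥0∞))
    (hadd : ∀ f ∈ F, ∀ g ∈ F, f + g ∈ F)
    (hsmul : ∀ c : ℝ≥0∞, 0 < c → c < ∞ → ∀ f ∈ F, c • f ∈ F)
    (f₀ : Y → ℝ≥0∞) (hf₀F : f₀ ∈ F) (hf₀pos : ∀ y, 0 < f₀ y) (hf₀fin : ∀ y, f₀ y < ∞)
    (φ : Y → ℝ≥0∞) (A : Set Y) (α M : ℝ≥0∞)
    (hα : 1 < α) (hα' : α < ∞) (hM : 1 < M) (hM' : M < ∞)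
    (hA : ∀ y ∈ A, α * φ y ≤ min (coneEnvelope F φ y) (M * f₀ y)) :
    coneEnvelope F (Set.indicator Aᶜ φ) = coneEnvelope F φ :=
  stmt_0_general F hadd hsmul f₀ hf₀F hf₀fin φ A α M hα hα' hM hM' hA
end

section
/- Let X be a topological space with a second measurable-space structure, and let 𝓝⁺ be a set of functions X → [0,∞] that is closed under pointwise limits of increasing sequences and under pointwise infima of arbitrary families. For φ : X → [0,∞] define N_φ := inf { u ∈ 𝓝⁺ : u ≥ φ }. Then N_φ ∈ 𝓝⁺, N_φ is the smallest element of 𝓝⁺ majorizing φ, and for any increasing sequence φ_m ↑ φ one has N_{φ_m} ↑ N_φ pointwise. -/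
open scoped ENNReal

theorem stmt_2 {X : Type*} [TopologicalSpace X] [MeasurableSpace X]
    (𝓝plus : Set (X → ℝ≥0∞))
    (hincr : ∀ u : ℕ → X → ℝ≥0∞, (∀ m, u m ∈ 𝓝plus) → (∀ x, Monotone fun m => u m x) →
      (fun x => ⨆ m, u m x) ∈ 𝓝plus)
    (hinf : ∀ 𝓥 ⊆ 𝓝plus, (fun x => ⨅ u ∈ 𝓥, u x) ∈ 𝓝plus)
    (φ : X → ℝ≥0∞) :
    letI Nenv : (X → ℝ≥0∞) → X → ℝ≥0∞ :=
      fun ψ x => ⨅ u ∈ {u | u ∈ 𝓝plus ∧ ∀ z, ψ z ≤ u z}, u x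
    Nenv φ ∈ 𝓝plus ∧ (∀ z, φ z ≤ Nenv φ z) ∧
    (∀ u ∈ 𝓝plus, (∀ z, φ z ≤ u z) → ∀ z, Nenv φ z ≤ u z) ∧
    (∀ φm : ℕ → X → ℝ≥0∞, (∀ x, Monotone fun m => φm m x) →
      (∀ x, (⨆ m, φm m x) = φ x) →
      ((∀ x, Monotone fun m => Nenv (φm m) x) ∧ ∀ x, (⨆ m, Nenv (φm m) x) = Nenv φ x)) := by
  set Nenv : (X → ℝ≥0∞) → X → ℝ≥0∞ := fun ψ x => ⨅ u ∈ {u | u ∈ 𝓝plus ∧ ∀ z, ψ z ≤ u z}, u x with hN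
  -- basic facts
  have hmem : ∀ ψ : X → ℝ≥0∞, Nenv ψ ∈ 𝓝plus := by
    intro ψ
    exact hinf _ (fun u hu => hu.1)
  have hge : ∀ (ψ : X → ℝ≥0∞) z, ψ z ≤ Nenv ψ z := by
    intro ψ z
    exact le_iInf₂ fun u hu => hu.2 z
  have hle : ∀ (ψ u : X → ℝ≥0∞), u ∈ 𝓝plus → (∀ z, ψ z ≤ u z) → ∀ z, Nenv ψ z ≤ u z := by
    intro ψ u hu hψu z
    exact iInf₂_le u ⟨hu, hψu⟩
  have hmono : ∀ (ψ₁ ψ₂ : X → ℝ≥0∞), (∀ z, ψ₁ z ≤ ψ₂ z) → ∀ z, Nenv ψ₁ z ≤ Nenv ψ₂ z := by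
    intro ψ₁ ψ₂ h z
    exact hle ψ₁ (Nenv ψ₂) (hmem ψ₂) (fun w => (h w).trans (hge ψ₂ w)) z
  refine ⟨hmem φ, hge φ, fun u hu h z => hle φ u hu h z, ?_⟩
  intro φm hφmono hφsup
  have hφmle : ∀ m z, φm m z ≤ φ z := by
    intro m z
    rw [← hφsup z]
    exact le_iSup (fun m => φm m z) m
  have hNm : ∀ x, Monotone fun m => Nenv (φm m) x := by
    intro x m n hmn
    exact hmono _ _ (fun z => hφmono z hmn) x
  refine ⟨hNm, fun x => le_antisymm ?_ ?_⟩
  · exact iSup_le fun m => hmono _ _ (hφmle m) x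
  · -- g := sup of envelopes is a majorant of φ in 𝓝plus
    have hg : (fun x => ⨆ m, Nenv (φm m) x) ∈ 𝓝plus :=
      hincr _ (fun m => hmem (φm m)) hNm
    have hgφ : ∀ z, φ z ≤ ⨆ m, Nenv (φm m) z := by
      intro z
      rw [← hφsup z]
      exact iSup_mono fun m => hge (φm m) z
    exact hle φ _ hg hgφ x
end
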